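/- Let G be a flow-admissible signed series-parallel graph with no nowhere-zero 6-flow that has the minimum number of edges among all such graphs. Then every non-terminal vertex of G has degree at least three. -/

import Mathlib

/-!
Signed multigraphs (parallel edges allowed), two-terminal graphs,
series/parallel connections and flows, following the terminology of
Kaiser–Rollová, "Nowhere-zero flows in signed series-parallel graphs".

Vertices and edges are labelled by natural numbers.  An edge `e` has the
two endvertices `fst e` and `snd e` (its two half-edges are the ends at
`fst e` and at `snd e`), and `sign e = true` means that `e` is positive.
-/

/-- The value `+1` (pointing towards its endvertex) or `-1` (pointing away)
of a Boolean direction of a half-edge. -/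
def dirVal (b : Bool) : ℤ := if b then 1 else -1

/-- A signed multigraph. -/
structure SignedGraph where
  verts : Finset ℕ
  edges : Finset ℕ
  fst : ℕ → ℕ
  snd : ℕ → ℕ
  sign : ℕ → Bool
  fst_mem : ∀ e ∈ edges, fst e ∈ verts
  snd_mem : ∀ e ∈ edges, snd e ∈ verts

namespace SignedGraph

/-- Edge `e` joins the vertices `u` and `v`. -/
def Joins (G : SignedGraph) (e u v : ℕ) : Prop :=
  (G.fst e = u ∧ G.snd e = v) ∨ (G.fst e = v ∧ G.snd e = u)

/-- `u` and `v` are adjacent (joined by some edge). -/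
def Adj (G : SignedGraph) (u v : ℕ) : Prop := ∃ e ∈ G.edges, G.Joins e u v

/-- The degree of a vertex (each incidence of an edge counts once,
so loops count twice). -/
def degree (G : SignedGraph) (v : ℕ) : ℕ :=
  ∑ e ∈ G.edges, ((if G.fst e = v then 1 else 0) + (if G.snd e = v then 1 else 0))

/-- `e` and `f` are parallel edges: distinct edges joining the same
pair of vertices. -/
def Parallel (G : SignedGraph) (e f : ℕ) : Prop :=
  e ≠ f ∧ ((G.fst e = G.fst f ∧ G.snd e = G.snd f) ∨
           (G.fst e = G.snd f ∧ G.snd e = G.fst f))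

/-- `v` is contained in a 2-cycle (a cycle formed by two parallel edges). -/
def In2Cycle (G : SignedGraph) (v : ℕ) : Prop :=
  ∃ e ∈ G.edges, ∃ f ∈ G.edges, G.Parallel e f ∧ G.fst e ≠ G.snd e ∧
    (G.fst e = v ∨ G.snd e = v)

/-- `beta G` is the number of distinct 2-cycles of `G`. -/
def beta (G : SignedGraph) : ℕ :=
  ((G.edges ×ˢ G.edges).filter fun p => p.1 < p.2 ∧ G.fst p.1 ≠ G.snd p.1 ∧
     ((G.fst p.1 = G.fst p.2 ∧ G.snd p.1 = G.snd p.2) ∨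
      (G.fst p.1 = G.snd p.2 ∧ G.snd p.1 = G.fst p.2))).card

/-- An orientation of a signed graph: `o₁ e` (resp. `o₂ e`) tells whether the
half-edge of `e` at `fst e` (resp. at `snd e`) points towards its endvertex.
Of the two half-edges of a positive edge exactly one points towards its
endvertex, while for a negative edge none or both do. -/
def IsOrientation (G : SignedGraph) (o₁ o₂ : ℕ → Bool) : Prop :=
  ∀ e ∈ G.edges, (G.sign e = true → o₁ e ≠ o₂ e) ∧ (G.sign e = false → o₁ e = o₂ e)

/-- The excess (inflow minus outflow) at a vertex `v`. -/
def excess (G : SignedGraph) (o₁ o₂ : ℕ → Bool) (φ : ℕ → ℤ) (v : ℕ) : ℤ :=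
  ∑ e ∈ G.edges, ((if G.fst e = v then dirVal (o₁ e) * φ e else 0) +
                  (if G.snd e = v then dirVal (o₂ e) * φ e else 0))

/-- `(o₁, o₂, φ)` is a nowhere-zero `k`-flow on `G`: an orientation together
with a valuation of the edges by nonzero integers of absolute value less
than `k` such that at every vertex the inflow equals the outflow. -/
structure IsNZFlow (G : SignedGraph) (k : ℕ) (o₁ o₂ : ℕ → Bool) (φ : ℕ → ℤ) : Prop where
  orient : G.IsOrientation o₁ o₂
  nonzero : ∀ e ∈ G.edges, φ e ≠ 0
  bounded : ∀ e ∈ G.edges, |φ e| < (k : ℤ)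
  conserve : ∀ v ∈ G.verts, G.excess o₁ o₂ φ v = 0

/-- `G` admits a nowhere-zero `k`-flow. -/
def HasNZFlow (G : SignedGraph) (k : ℕ) : Prop := ∃ o₁ o₂ φ, G.IsNZFlow k o₁ o₂ φ

/-- `G` is flow-admissible: it admits a nowhere-zero `k`-flow for some `k`. -/
def FlowAdmissible (G : SignedGraph) : Prop := ∃ k, G.HasNZFlow k

/-- `(vs, es)` is a cycle of `G`: distinct vertices `vs = [v₀, …, v_{m-1}]`,
distinct edges `es = [e₀, …, e_{m-1}]`, where `eᵢ` joins `vᵢ` and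
`v_{i+1 (mod m)}`. -/
structure IsCycle (G : SignedGraph) (vs es : List ℕ) : Prop where
  nonempty : es ≠ []
  len : vs.length = es.length
  vnodup : vs.Nodup
  enodup : es.Nodup
  vmem : ∀ v ∈ vs, v ∈ G.verts
  emem : ∀ e ∈ es, e ∈ G.edges
  link : ∀ i < es.length,
    G.Joins (es.getD i 0) (vs.getD i 0) (vs.getD ((i + 1) % vs.length) 0)

/-- The number of negative edges in a list of edges. -/
def negCount (G : SignedGraph) (es : List ℕ) : ℕ :=
  (es.filter fun e => G.sign e = false).length

/-- A balanced cycle: a cycle with an even number of negative edges. -/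
def IsBalancedCycle (G : SignedGraph) (vs es : List ℕ) : Prop :=
  G.IsCycle vs es ∧ Even (G.negCount es)

/-- An unbalanced cycle: a cycle with an odd number of negative edges. -/
def IsUnbalancedCycle (G : SignedGraph) (vs es : List ℕ) : Prop :=
  G.IsCycle vs es ∧ Odd (G.negCount es)

/-- A signed graph is unbalanced if it contains an unbalanced cycle. -/
def IsUnbalanced (G : SignedGraph) : Prop := ∃ vs es, G.IsUnbalancedCycle vs es

/-- `(vs, es)` is a path of `G` (possibly trivial, i.e. a single vertex). -/
structure IsPath (G : SignedGraph) (vs es : List ℕ) : Prop where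
  nonempty : vs ≠ []
  len : vs.length = es.length + 1
  vnodup : vs.Nodup
  enodup : es.Nodup
  vmem : ∀ v ∈ vs, v ∈ G.verts
  emem : ∀ e ∈ es, e ∈ G.edges
  link : ∀ i < es.length, G.Joins (es.getD i 0) (vs.getD i 0) (vs.getD (i + 1) 0)

/-- A barbell: two edge-disjoint unbalanced cycles together with a path,
which either joins two vertex-disjoint cycles and is internally
vertex-disjoint from them, or is the trivial path at the single
common vertex of the two cycles. -/
structure IsBarbell (G : SignedGraph) (vs₁ es₁ vs₂ es₂ pvs pes : List ℕ) : Prop where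
  cyc1 : G.IsUnbalancedCycle vs₁ es₁
  cyc2 : G.IsUnbalancedCycle vs₂ es₂
  edge_disj : ∀ e ∈ es₁, e ∉ es₂
  path : G.IsPath pvs pes
  shape :
    ((∀ v ∈ vs₁, v ∉ vs₂) ∧
      pvs.getD 0 0 ∈ vs₁ ∧ pvs.getD (pvs.length - 1) 0 ∈ vs₂ ∧
      (∀ i, 0 < i → i < pvs.length - 1 → pvs.getD i 0 ∉ vs₁ ∧ pvs.getD i 0 ∉ vs₂)) ∨
    (∃ w, w ∈ vs₁ ∧ w ∈ vs₂ ∧ (∀ v ∈ vs₁, v ∈ vs₂ → v = w) ∧ pvs = [w] ∧ pes = [])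

/-- The edge `e` is contained in a signed circuit (a balanced cycle
or a barbell). -/
def InSignedCircuit (G : SignedGraph) (e : ℕ) : Prop :=
  (∃ vs es, G.IsBalancedCycle vs es ∧ e ∈ es) ∨
  (∃ vs₁ es₁ vs₂ es₂ pvs pes, G.IsBarbell vs₁ es₁ vs₂ es₂ pvs pes ∧
    (e ∈ es₁ ∨ e ∈ es₂ ∨ e ∈ pes))

/-- `H` is a subgraph of `G` (with the same labels, endvertices and signs). -/
def IsSubgraph (H G : SignedGraph) : Prop :=
  H.verts ⊆ G.verts ∧ H.edges ⊆ G.edges ∧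
  ∀ e ∈ H.edges, H.fst e = G.fst e ∧ H.snd e = G.snd e ∧ H.sign e = G.sign e

/-- Switching at a vertex `v`: the signs of all edges incident with `v`
(i.e. with exactly one end at `v`) are inverted. -/
def switchAt (G : SignedGraph) (v : ℕ) : SignedGraph where
  verts := G.verts
  edges := G.edges
  fst := G.fst
  snd := G.snd
  sign := fun e => if xor (G.fst e == v) (G.snd e == v) then !(G.sign e) else G.sign e
  fst_mem := G.fst_mem
  snd_mem := G.snd_mem

/-- Connectedness of a (nonempty) signed graph. -/
def Connected (G : SignedGraph) : Prop :=
  G.verts.Nonempty ∧ ∀ u ∈ G.verts, ∀ v ∈ G.verts, Relation.ReflTransGen G.Adj u v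

/-- Deletion of a vertex together with all incident edges. -/
def deleteVert (G : SignedGraph) (v : ℕ) : SignedGraph where
  verts := G.verts.erase v
  edges := G.edges.filter fun e => G.fst e ≠ v ∧ G.snd e ≠ v
  fst := G.fst
  snd := G.snd
  sign := G.sign
  fst_mem := by
    intro e he
    simp only [Finset.mem_filter] at he
    exact Finset.mem_erase.mpr ⟨he.2.1, G.fst_mem e he.1⟩
  snd_mem := by
    intro e he
    simp only [Finset.mem_filter] at he
    exact Finset.mem_erase.mpr ⟨he.2.2, G.snd_mem e he.1⟩

/-- `G` is 2-connected: it is connected and remains connected after the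
deletion of any single vertex. -/
def TwoConnected (G : SignedGraph) : Prop :=
  G.Connected ∧ ∀ v ∈ G.verts, (G.deleteVert v).Connected

end SignedGraph

/-- A two-terminal signed graph: a signed graph with two distinguished
distinct vertices, the source terminal `s` and the target terminal `t`. -/
structure TTGraph extends SignedGraph where
  s : ℕ
  t : ℕ
  s_mem : s ∈ verts
  t_mem : t ∈ verts
  s_ne_t : s ≠ t

namespace TTGraph

/-- Switching at a vertex of a two-terminal signed graph. -/
def switchAt (G : TTGraph) (v : ℕ) : TTGraph where
  toSignedGraph := G.toSignedGraph.switchAt v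
  s := G.s
  t := G.t
  s_mem := G.s_mem
  t_mem := G.t_mem
  s_ne_t := G.s_ne_t

end TTGraph

/-- Two two-terminal signed graphs are switching equivalent if one is
obtained from the other by a finite sequence of switchings. -/
def SwitchEquiv (G G' : TTGraph) : Prop :=
  Relation.ReflTransGen (fun A B => ∃ v ∈ A.verts, B = A.switchAt v) G G'

/-- `G` is the series connection `S(H₁, H₂)`: `H₁` and `H₂` are subgraphs
of `G` sharing exactly the vertex `H₁.t = H₂.s`, partitioning the edges,
with `G.s = H₁.s` and `G.t = H₂.t`. -/
structure IsSeriesConn2 (G H₁ H₂ : TTGraph) : Prop where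
  sub1 : SignedGraph.IsSubgraph H₁.toSignedGraph G.toSignedGraph
  sub2 : SignedGraph.IsSubgraph H₂.toSignedGraph G.toSignedGraph
  vert_union : H₁.verts ∪ H₂.verts = G.verts
  vert_inter : H₁.verts ∩ H₂.verts = {H₁.t}
  mid : H₁.t = H₂.s
  edge_union : H₁.edges ∪ H₂.edges = G.edges
  edge_disj : Disjoint H₁.edges H₂.edges
  src : G.s = H₁.s
  tgt : G.t = H₂.t

/-- `G` is the parallel connection `P(H₁, H₂)`: `H₁` and `H₂` are subgraphs
of `G` sharing exactly the two terminals, partitioning the edges, with the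
terminals of `G`, `H₁` and `H₂` identified. -/
structure IsParallelConn2 (G H₁ H₂ : TTGraph) : Prop where
  sub1 : SignedGraph.IsSubgraph H₁.toSignedGraph G.toSignedGraph
  sub2 : SignedGraph.IsSubgraph H₂.toSignedGraph G.toSignedGraph
  vert_union : H₁.verts ∪ H₂.verts = G.verts
  vert_inter : H₁.verts ∩ H₂.verts = {H₁.s, H₁.t}
  src_eq : H₁.s = H₂.s
  tgt_eq : H₁.t = H₂.t
  edge_union : H₁.edges ∪ H₂.edges = G.edges
  edge_disj : Disjoint H₁.edges H₂.edges
  src : G.s = H₁.s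
  tgt : G.t = H₁.t

/-- `G` is a (signed) copy of `K₂`: a single edge joining the two terminals. -/
def IsSignedK2 (G : TTGraph) : Prop :=
  G.verts = {G.s, G.t} ∧ ∃ e, G.edges = {e} ∧ G.toSignedGraph.Joins e G.s G.t

/-- Series-parallel two-terminal graphs: obtained from copies of `K₂` by
iterated series and parallel connections. -/
inductive IsSP : TTGraph → Prop
  | k2 {G} : IsSignedK2 G → IsSP G
  | series {G H₁ H₂} : IsSeriesConn2 G H₁ H₂ → IsSP H₁ → IsSP H₂ → IsSP G
  | parallel {G H₁ H₂} : IsParallelConn2 G H₁ H₂ → IsSP H₁ → IsSP H₂ → IsSP G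

/-- `G` is the series connection `S(H₁, …, Hₙ)` of the graphs in the list
(of length at least two). -/
inductive IsSeriesConnList : TTGraph → List TTGraph → Prop
  | two {G H₁ H₂} : IsSeriesConn2 G H₁ H₂ → IsSeriesConnList G [H₁, H₂]
  | cons {G G' H l} : IsSeriesConn2 G H G' → IsSeriesConnList G' l →
      IsSeriesConnList G (H :: l)

/-- `G` is the parallel connection `P(H₁, …, Hₙ)` of the graphs in the list
(of length at least two). -/
inductive IsParallelConnList : TTGraph → List TTGraph → Prop
  | two {G H₁ H₂} : IsParallelConn2 G H₁ H₂ → IsParallelConnList G [H₁, H₂]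
  | cons {G G' H l} : IsParallelConn2 G H G' → IsParallelConnList G' l →
      IsParallelConnList G (H :: l)

/-- `l` is the list of parts of `G` for a series connection: `G` is a series
connection of the series-parallel graphs in `l`, with `l` of maximum length. -/
def IsSeriesPartsOf (G : TTGraph) (l : List TTGraph) : Prop :=
  IsSeriesConnList G l ∧ (∀ H ∈ l, IsSP H) ∧
  ∀ l', IsSeriesConnList G l' → (∀ H ∈ l', IsSP H) → l'.length ≤ l.length

/-- `l` is the list of parts of `G` for a parallel connection. -/
def IsParallelPartsOf (G : TTGraph) (l : List TTGraph) : Prop :=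
  IsParallelConnList G l ∧ (∀ H ∈ l, IsSP H) ∧
  ∀ l', IsParallelConnList G l' → (∀ H ∈ l', IsSP H) → l'.length ≤ l.length

/-- `l` is the list of parts of `G`. -/
def IsPartsOf (G : TTGraph) (l : List TTGraph) : Prop :=
  IsSeriesPartsOf G l ∨ IsParallelPartsOf G l

/-- `H` is a part of `G`. -/
def IsPart (H G : TTGraph) : Prop := ∃ l, IsPartsOf G l ∧ H ∈ l

/-- `H` is a piece of `G`: there is a sequence `H = H₀, H₁, …, Hₘ = G`
where each `Hⱼ` is a part of `H_{j+1}`; in particular `G` is a piece of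
itself. -/
def IsPiece (H G : TTGraph) : Prop := Relation.ReflTransGen IsPart H G

/-- `G` is of series type: it is a series connection of its parts. -/
def IsSeriesType (G : TTGraph) : Prop := ∃ l, IsSeriesPartsOf G l

/-- `G` is of parallel type: it is a parallel connection of its parts. -/
def IsParallelType (G : TTGraph) : Prop := ∃ l, IsParallelPartsOf G l

/-- `H` is an endpart of `G`: the first or last part of a series
decomposition of `G` into its parts. -/
def IsEndpartOf (H G : TTGraph) : Prop :=
  ∃ l, IsSeriesPartsOf G l ∧ (l.head? = some H ∨ l.getLast? = some H)

/-- `DepthLe G d`: the depth of `G` is at most `d`.  The depth of a signed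
`K₂` is `0`; otherwise it is `1` plus the maximum depth of a part. -/
inductive DepthLe : TTGraph → ℕ → Prop
  | k2 {G d} : IsSignedK2 G → DepthLe G d
  | step {G l d} : IsPartsOf G l → (∀ H ∈ l, DepthLe H d) → DepthLe G (d + 1)

/-- `HasDepth G d`: the depth of `G` is exactly `d`, i.e. `d` is the least
upper bound in the recursive definition of depth. -/
def HasDepth (G : TTGraph) (d : ℕ) : Prop :=
  DepthLe G d ∧ ∀ d' < d, ¬ DepthLe G d'

/-- `G` is reduced: each non-terminal vertex has degree at least `3`, and
no two parallel edges have the same sign. -/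
def IsReducedGraph (G : TTGraph) : Prop :=
  (∀ v ∈ G.verts, v ≠ G.s → v ≠ G.t → 3 ≤ G.toSignedGraph.degree v) ∧
  (∀ e ∈ G.edges, ∀ f ∈ G.edges, G.toSignedGraph.Parallel e f → G.sign e ≠ G.sign f)

/-- `G` is a positive `K₂` (denoted `K₂⁺`). -/
def IsPositiveK2 (G : TTGraph) : Prop :=
  IsSignedK2 G ∧ ∀ e ∈ G.edges, G.sign e = true

/-- `G` is the unbalanced 2-cycle `D`: two parallel edges of opposite signs
joining the two terminals. -/
def IsUnbalanced2Cycle (G : TTGraph) : Prop :=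
  G.verts = {G.s, G.t} ∧ ∃ e f, e ≠ f ∧ G.edges = {e, f} ∧
    G.toSignedGraph.Joins e G.s G.t ∧ G.toSignedGraph.Joins f G.s G.t ∧
    G.sign e ≠ G.sign f

/-- `G` is a string: a copy of `K₂⁺` or `D`, or a series connection of copies
of `K₂⁺` and `D`, in which every non-terminal vertex lies in a 2-cycle. -/
def IsString (G : TTGraph) : Prop :=
  (IsPositiveK2 G ∨ IsUnbalanced2Cycle G ∨
    ∃ l, IsSeriesConnList G l ∧ ∀ H ∈ l, IsPositiveK2 H ∨ IsUnbalanced2Cycle H) ∧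
  ∀ v ∈ G.verts, v ≠ G.s → v ≠ G.t → G.toSignedGraph.In2Cycle v

/-- `G` is a necklace: a parallel connection of two strings, at least one of
which is nontrivial (has more than two vertices). -/
def IsNecklace (G : TTGraph) : Prop :=
  ∃ H₁ H₂, IsParallelConn2 G H₁ H₂ ∧ IsString H₁ ∧ IsString H₂ ∧
    (2 < H₁.verts.card ∨ 2 < H₂.verts.card)

/-- `(o₁, o₂, φ)` is an `(a,b)`-pseudoflow on the two-terminal signed graph
`G`: like a nowhere-zero 6-flow, except that at the source terminal the
outflow exceeds the inflow by `a`, and at the target terminal the inflow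
exceeds the outflow by `b`. -/
structure IsPseudoflow (G : TTGraph) (a b : ℤ) (o₁ o₂ : ℕ → Bool) (φ : ℕ → ℤ) :
    Prop where
  orient : G.toSignedGraph.IsOrientation o₁ o₂
  nonzero : ∀ e ∈ G.edges, φ e ≠ 0
  bounded : ∀ e ∈ G.edges, |φ e| < 6
  conserve : ∀ v ∈ G.verts, v ≠ G.s → v ≠ G.t →
    G.toSignedGraph.excess o₁ o₂ φ v = 0
  out_s : G.toSignedGraph.excess o₁ o₂ φ G.s = -a
  in_t : G.toSignedGraph.excess o₁ o₂ φ G.t = b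

/-- `G` admits an `(a,b)`-pseudoflow. -/
def HasPseudoflow (G : TTGraph) (a b : ℤ) : Prop :=
  ∃ o₁ o₂ φ, IsPseudoflow G a b o₁ o₂ φ

/-- `I₅ = {-5, …, 5}`. -/
noncomputable def I5 : Finset ℤ := Finset.Icc (-5) 5

/-- The pair `(a,b)` is valid for `G`: `a ≠ 0` or `deg(s) ≥ 2`, and
`b ≠ 0` or `deg(t) ≥ 2`. -/
def ValidPair (G : TTGraph) (a b : ℤ) : Prop :=
  (a ≠ 0 ∨ 2 ≤ G.toSignedGraph.degree G.s) ∧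
  (b ≠ 0 ∨ 2 ≤ G.toSignedGraph.degree G.t)

/-- `G` is a flow-admissible signed series-parallel graph with no
nowhere-zero 6-flow, with the minimum number of edges among all such
graphs. -/
def MinCounterexample (G : TTGraph) : Prop :=
  IsSP G ∧ G.toSignedGraph.FlowAdmissible ∧ ¬ G.toSignedGraph.HasNZFlow 6 ∧
  ∀ G' : TTGraph, IsSP G' → G'.toSignedGraph.FlowAdmissible →
    ¬ G'.toSignedGraph.HasNZFlow 6 → G.edges.card ≤ G'.edges.card

/-- `W` is a copy of `S(K₂⁺, D, K₂⁺)`. -/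
def IsSK2DK2 (W : TTGraph) : Prop :=
  ∃ A B C, IsSeriesConnList W [A, B, C] ∧ IsPositiveK2 A ∧
    IsUnbalanced2Cycle B ∧ IsPositiveK2 C

/-- `G'` is obtained from `G` by replacing the piece `H` (with terminals
`H.s`, `H.t`) by the two-terminal graph `W`: the edges and non-terminal
vertices of `H` are removed, `W` (whose new vertices are fresh) is added,
and its terminals are identified with the terminals of `H`. -/
def IsReplacement (G H G' W : TTGraph) : Prop :=
  W.s = H.s ∧ W.t = H.t ∧ G'.s = G.s ∧ G'.t = G.t ∧
  W.verts ∩ G.verts ⊆ {H.s, H.t} ∧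
  G'.verts = (G.verts \ (H.verts \ {H.s, H.t})) ∪ W.verts ∧
  G'.edges = (G.edges \ H.edges) ∪ W.edges ∧
  Disjoint (G.edges \ H.edges) W.edges ∧
  (∀ e ∈ G.edges \ H.edges,
    G'.fst e = G.fst e ∧ G'.snd e = G.snd e ∧ G'.sign e = G.sign e) ∧
  SignedGraph.IsSubgraph W.toSignedGraph G'.toSignedGraph

/-!
Suppressing a non-terminal vertex `v` of degree two, i.e. replacing its two edges `e`, `f` by a
single edge whose sign is the product of theirs, removes one edge, keeps the graph
series-parallel, and transports nowhere-zero `k`-flows in both directions. A non-terminal vertex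
of a flow-admissible series-parallel graph has degree at least one (there are no isolated
vertices) and not exactly one (conservation fails at a vertex met by a single non-loop edge), so
degree two would yield a smaller counterexample.

Series-parallelness is preserved by induction on the decomposition. The only delicate case is
when `v` is the junction of a series connection `S(H₁, H₂)`: then `e` is the only edge of `H₁` at
its target and `f` the only edge of `H₂` at its source, and re-associating series connections
reduces this to the case where `H₁` and `H₂` are single edges.
-/

namespace SignedGraph

variable {G H K : SignedGraph} {g u v z : ℕ}

def Incident (G : SignedGraph) (g z : ℕ) : Prop := G.fst g = z ∨ G.snd g = z

instance (G : SignedGraph) (g z : ℕ) : Decidable (G.Incident g z) :=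
  inferInstanceAs (Decidable (_ ∨ _))

def IncidentOnce (G : SignedGraph) (g v : ℕ) : Prop :=
  (G.fst g = v ∧ G.snd g ≠ v) ∨ (G.fst g ≠ v ∧ G.snd g = v)

def otherEnd (G : SignedGraph) (g v : ℕ) : ℕ := if G.fst g = v then G.snd g else G.fst g

def NoIsolated (G : SignedGraph) : Prop := ∀ z ∈ G.verts, ∃ g ∈ G.edges, G.Incident g z

def Loopless (G : SignedGraph) : Prop := ∀ g ∈ G.edges, G.fst g ≠ G.snd g

def IsOnlyEdgeAt (G : SignedGraph) (g z : ℕ) : Prop :=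
  ∀ g' ∈ G.edges, G.Incident g' z → g' = g

lemma Joins.symm (h : G.Joins g u v) : G.Joins g v u := Or.symm h

lemma IncidentOnce.incident (h : G.IncidentOnce g v) : G.Incident g v := by
  rcases h with ⟨h, -⟩ | ⟨-, h⟩
  exacts [Or.inl h, Or.inr h]

lemma IncidentOnce.otherEnd_ne (h : G.IncidentOnce g v) : G.otherEnd g v ≠ v := by
  rcases h with ⟨h₁, h₂⟩ | ⟨h₁, h₂⟩ <;> simp [otherEnd, h₁, h₂]

lemma otherEnd_mem (hg : g ∈ G.edges) (v : ℕ) : G.otherEnd g v ∈ G.verts := by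
  unfold otherEnd
  split
  exacts [G.snd_mem g hg, G.fst_mem g hg]

lemma Joins.otherEnd_eq (h : G.Joins g u v) (huv : u ≠ v) : G.otherEnd g v = u := by
  rcases h with ⟨h₁, h₂⟩ | ⟨h₁, h₂⟩
  · rw [otherEnd, if_neg (h₁ ▸ huv), h₁]
  · rw [otherEnd, if_pos h₁, h₂]

lemma Loopless.incidentOnce (hG : G.Loopless) (hg : g ∈ G.edges) (hinc : G.Incident g v) :
    G.IncidentOnce g v := by
  rcases hinc with h | h
  · exact Or.inl ⟨h, fun h' => hG g hg (h.trans h'.symm)⟩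
  · exact Or.inr ⟨fun h' => hG g hg (h'.trans h.symm), h⟩

lemma Loopless.degree_eq_card (hG : G.Loopless) (v : ℕ) :
    G.degree v = (G.edges.filter (G.Incident · v)).card := by
  rw [Finset.card_filter]
  refine Finset.sum_congr rfl fun g hg => ?_
  by_cases h₁ : G.fst g = v <;> by_cases h₂ : G.snd g = v
  · exact absurd (h₁.trans h₂.symm) (hG g hg)
  all_goals simp [Incident, h₁, h₂]

lemma IsSubgraph.trans (h₁ : IsSubgraph H G) (h₂ : IsSubgraph G K) : IsSubgraph H K :=
  ⟨h₁.1.trans h₂.1, h₁.2.1.trans h₂.2.1, fun g hg =>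
    let ⟨a₁, a₂, a₃⟩ := h₁.2.2 g hg
    let ⟨b₁, b₂, b₃⟩ := h₂.2.2 g (h₁.2.1 hg)
    ⟨a₁.trans b₁, a₂.trans b₂, a₃.trans b₃⟩⟩

lemma IsSubgraph.fst_eq (h : IsSubgraph H G) (hg : g ∈ H.edges) : G.fst g = H.fst g :=
  (h.2.2 g hg).1.symm

lemma IsSubgraph.snd_eq (h : IsSubgraph H G) (hg : g ∈ H.edges) : G.snd g = H.snd g :=
  (h.2.2 g hg).2.1.symm

lemma IsSubgraph.sign_eq (h : IsSubgraph H G) (hg : g ∈ H.edges) : G.sign g = H.sign g :=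
  (h.2.2 g hg).2.2.symm

lemma IsSubgraph.incident_iff (h : IsSubgraph H G) (hg : g ∈ H.edges) :
    G.Incident g z ↔ H.Incident g z := by
  rw [Incident, Incident, h.fst_eq hg, h.snd_eq hg]

lemma IsSubgraph.mem_verts_of_incident (h : IsSubgraph H G) (hg : g ∈ H.edges)
    (hinc : G.Incident g z) : z ∈ H.verts := by
  rcases (h.incident_iff hg).1 hinc with rfl | rfl
  exacts [H.fst_mem g hg, H.snd_mem g hg]

lemma IsSubgraph.incidentOnce_iff (h : IsSubgraph H G) (hg : g ∈ H.edges) :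
    G.IncidentOnce g v ↔ H.IncidentOnce g v := by
  rw [IncidentOnce, IncidentOnce, h.fst_eq hg, h.snd_eq hg]

lemma IsSubgraph.joins_iff (h : IsSubgraph H G) (hg : g ∈ H.edges) :
    G.Joins g u v ↔ H.Joins g u v := by
  rw [Joins, Joins, h.fst_eq hg, h.snd_eq hg]

lemma IsSubgraph.otherEnd_eq (h : IsSubgraph H G) (hg : g ∈ H.edges) (v : ℕ) :
    G.otherEnd g v = H.otherEnd g v := by
  rw [otherEnd, otherEnd, h.fst_eq hg, h.snd_eq hg]

lemma IsOnlyEdgeAt.mono (h : G.IsOnlyEdgeAt g z) (hsub : IsSubgraph H G) :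
    H.IsOnlyEdgeAt g z := fun g' hg' hinc =>
  h g' (hsub.2.1 hg') ((hsub.incident_iff hg').2 hinc)

structure IsEdgePartition (G H₁ H₂ : SignedGraph) : Prop where
  sub1 : IsSubgraph H₁ G
  sub2 : IsSubgraph H₂ G
  vert_union : H₁.verts ∪ H₂.verts = G.verts
  edge_union : H₁.edges ∪ H₂.edges = G.edges
  edge_disj : Disjoint H₁.edges H₂.edges

namespace IsEdgePartition

variable {H₁ H₂ : SignedGraph}

lemma symm (hP : IsEdgePartition G H₁ H₂) : IsEdgePartition G H₂ H₁ :=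
  ⟨hP.sub2, hP.sub1, by rw [Finset.union_comm, hP.vert_union],
    by rw [Finset.union_comm, hP.edge_union], hP.edge_disj.symm⟩

lemma mem_or_mem (hP : IsEdgePartition G H₁ H₂) (hg : g ∈ G.edges) :
    g ∈ H₁.edges ∨ g ∈ H₂.edges := by
  rwa [← hP.edge_union, Finset.mem_union] at hg

lemma noIsolated (hP : IsEdgePartition G H₁ H₂) (h₁ : H₁.NoIsolated) (h₂ : H₂.NoIsolated) :
    G.NoIsolated := by
  intro z hz
  rw [← hP.vert_union, Finset.mem_union] at hz
  rcases hz with hz | hz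
  · obtain ⟨g, hg, hinc⟩ := h₁ z hz
    exact ⟨g, hP.sub1.2.1 hg, (hP.sub1.incident_iff hg).2 hinc⟩
  · obtain ⟨g, hg, hinc⟩ := h₂ z hz
    exact ⟨g, hP.sub2.2.1 hg, (hP.sub2.incident_iff hg).2 hinc⟩

lemma loopless (hP : IsEdgePartition G H₁ H₂) (h₁ : H₁.Loopless) (h₂ : H₂.Loopless) :
    G.Loopless := by
  intro g hg
  rcases hP.mem_or_mem hg with hg | hg
  · rw [hP.sub1.fst_eq hg, hP.sub1.snd_eq hg]; exact h₁ g hg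
  · rw [hP.sub2.fst_eq hg, hP.sub2.snd_eq hg]; exact h₂ g hg

lemma mem_left_of_incident (hP : IsEdgePartition G H₁ H₂) (hg : g ∈ G.edges)
    (hinc : G.Incident g z) (hz : z ∉ H₂.verts) : g ∈ H₁.edges :=
  (hP.mem_or_mem hg).resolve_right fun hg₂ => hz (hP.sub2.mem_verts_of_incident hg₂ hinc)

lemma not_isOnlyEdgeAt (hP : IsEdgePartition G H₁ H₂) (h₁ : H₁.NoIsolated)
    (h₂ : H₂.NoIsolated) (hz₁ : z ∈ H₁.verts) (hz₂ : z ∈ H₂.verts) : ¬ G.IsOnlyEdgeAt g z := by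
  intro hg
  obtain ⟨g₁, hg₁, hinc₁⟩ := h₁ z hz₁
  obtain ⟨g₂, hg₂, hinc₂⟩ := h₂ z hz₂
  have e₁ := hg g₁ (hP.sub1.2.1 hg₁) ((hP.sub1.incident_iff hg₁).2 hinc₁)
  have e₂ := hg g₂ (hP.sub2.2.1 hg₂) ((hP.sub2.incident_iff hg₂).2 hinc₂)
  subst e₁
  exact Finset.disjoint_left.mp hP.edge_disj hg₁ (e₂ ▸ hg₂)

end IsEdgePartition

end SignedGraph

open SignedGraph

namespace TTGraph

def rev (G : TTGraph) : TTGraph where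
  toSignedGraph := G.toSignedGraph
  s := G.t
  t := G.s
  s_mem := G.t_mem
  t_mem := G.s_mem
  s_ne_t := G.s_ne_t.symm

lemma rev_t (G : TTGraph) : G.rev.t = G.s := rfl

def union (G B C : TTGraph) (hB : IsSubgraph B.toSignedGraph G.toSignedGraph)
    (hC : IsSubgraph C.toSignedGraph G.toSignedGraph) (hst : B.s ≠ C.t) : TTGraph where
  verts := B.verts ∪ C.verts
  edges := B.edges ∪ C.edges
  fst := G.fst
  snd := G.snd
  sign := G.sign
  fst_mem g hg := by
    rcases Finset.mem_union.mp hg with hg | hg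
    · exact Finset.mem_union_left _ (hB.fst_eq hg ▸ B.fst_mem g hg)
    · exact Finset.mem_union_right _ (hC.fst_eq hg ▸ C.fst_mem g hg)
  snd_mem g hg := by
    rcases Finset.mem_union.mp hg with hg | hg
    · exact Finset.mem_union_left _ (hB.snd_eq hg ▸ B.snd_mem g hg)
    · exact Finset.mem_union_right _ (hC.snd_eq hg ▸ C.snd_mem g hg)
  s := B.s
  t := C.t
  s_mem := Finset.mem_union_left _ B.s_mem
  t_mem := Finset.mem_union_right _ C.t_mem
  s_ne_t := hst

variable (G : TTGraph) {B C : TTGraph} (hB : IsSubgraph B.toSignedGraph G.toSignedGraph)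
  (hC : IsSubgraph C.toSignedGraph G.toSignedGraph) (hst : B.s ≠ C.t)

lemma union_verts : (G.union B C hB hC hst).verts = B.verts ∪ C.verts := rfl
lemma union_edges : (G.union B C hB hC hst).edges = B.edges ∪ C.edges := rfl

lemma union_isSubgraph : IsSubgraph (G.union B C hB hC hst).toSignedGraph G.toSignedGraph :=
  ⟨Finset.union_subset hB.1 hC.1, Finset.union_subset hB.2.1 hC.2.1, fun _ _ => ⟨rfl, rfl, rfl⟩⟩

lemma isSubgraph_union_left : IsSubgraph B.toSignedGraph (G.union B C hB hC hst).toSignedGraph :=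
  ⟨Finset.subset_union_left, Finset.subset_union_left, hB.2.2⟩

lemma isSubgraph_union_right : IsSubgraph C.toSignedGraph (G.union B C hB hC hst).toSignedGraph :=
  ⟨Finset.subset_union_right, Finset.subset_union_right, hC.2.2⟩

end TTGraph

section SeriesParallel

variable {G H₁ H₂ A B C X Y : TTGraph}

lemma IsSignedK2.rev (h : IsSignedK2 G) : IsSignedK2 G.rev := by
  obtain ⟨hv, e, he, hJ⟩ := h
  exact ⟨hv.trans (Finset.pair_comm _ _), e, he, hJ.symm⟩

namespace IsSeriesConn2

lemma isEdgePartition (h : IsSeriesConn2 G H₁ H₂) :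
    IsEdgePartition G.toSignedGraph H₁.toSignedGraph H₂.toSignedGraph :=
  ⟨h.sub1, h.sub2, h.vert_union, h.edge_union, h.edge_disj⟩

lemma rev (h : IsSeriesConn2 G H₁ H₂) : IsSeriesConn2 G.rev H₂.rev H₁.rev where
  sub1 := h.sub2
  sub2 := h.sub1
  vert_union := by rw [Finset.union_comm]; exact h.vert_union
  vert_inter := (Finset.inter_comm _ _).trans (h.vert_inter.trans (by rw [h.mid]; rfl))
  mid := h.mid.symm
  edge_union := by rw [Finset.union_comm]; exact h.edge_union
  edge_disj := h.edge_disj.symm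
  src := h.tgt
  tgt := h.src

lemma eq_mid_of_mem (h : IsSeriesConn2 G H₁ H₂) {x : ℕ} (h₁ : x ∈ H₁.verts)
    (h₂ : x ∈ H₂.verts) : x = H₁.t :=
  Finset.mem_singleton.mp (h.vert_inter ▸ Finset.mem_inter.mpr ⟨h₁, h₂⟩)

lemma t_notMem_left (h : IsSeriesConn2 G H₁ H₂) : H₂.t ∉ H₁.verts := fun h₁ =>
  H₂.s_ne_t ((h.eq_mid_of_mem h₁ H₂.t_mem).trans h.mid).symm

lemma s_notMem_right (h : IsSeriesConn2 G H₁ H₂) : H₁.s ∉ H₂.verts :=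
  h.rev.t_notMem_left

end IsSeriesConn2

namespace IsParallelConn2

lemma isEdgePartition (h : IsParallelConn2 G H₁ H₂) :
    IsEdgePartition G.toSignedGraph H₁.toSignedGraph H₂.toSignedGraph :=
  ⟨h.sub1, h.sub2, h.vert_union, h.edge_union, h.edge_disj⟩

lemma symm (h : IsParallelConn2 G H₁ H₂) : IsParallelConn2 G H₂ H₁ where
  sub1 := h.sub2
  sub2 := h.sub1
  vert_union := by rw [Finset.union_comm]; exact h.vert_union
  vert_inter := by rw [Finset.inter_comm, h.vert_inter, h.src_eq, h.tgt_eq]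
  src_eq := h.src_eq.symm
  tgt_eq := h.tgt_eq.symm
  edge_union := by rw [Finset.union_comm]; exact h.edge_union
  edge_disj := h.edge_disj.symm
  src := h.src.trans h.src_eq
  tgt := h.tgt.trans h.tgt_eq

lemma rev (h : IsParallelConn2 G H₁ H₂) : IsParallelConn2 G.rev H₁.rev H₂.rev where
  sub1 := h.sub1
  sub2 := h.sub2
  vert_union := h.vert_union
  vert_inter := h.vert_inter.trans (Finset.pair_comm _ _)
  src_eq := h.tgt_eq
  tgt_eq := h.src_eq
  edge_union := h.edge_union
  edge_disj := h.edge_disj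
  src := h.tgt
  tgt := h.src

end IsParallelConn2

namespace IsSP

lemma rev (h : IsSP G) : IsSP G.rev := by
  induction h with
  | k2 hk2 => exact k2 hk2.rev
  | series hS _ _ ih₁ ih₂ => exact series hS.rev ih₂ ih₁
  | parallel hP _ _ ih₁ ih₂ => exact parallel hP.rev ih₁ ih₂

lemma noIsolated (h : IsSP G) : G.NoIsolated := by
  induction h with
  | k2 hk2 =>
    obtain ⟨hv, e, he, hJ⟩ := hk2
    intro z hz
    rw [hv, Finset.mem_insert, Finset.mem_singleton] at hz
    refine ⟨e, by simp [he], ?_⟩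
    rcases hz with rfl | rfl <;> rcases hJ with ⟨h₁, h₂⟩ | ⟨h₁, h₂⟩ <;> simp [Incident, *]
  | series hS _ _ ih₁ ih₂ => exact hS.isEdgePartition.noIsolated ih₁ ih₂
  | parallel hP _ _ ih₁ ih₂ => exact hP.isEdgePartition.noIsolated ih₁ ih₂

lemma loopless (h : IsSP G) : G.Loopless := by
  induction h with
  | @k2 G hk2 =>
    obtain ⟨-, e, he, hJ⟩ := hk2
    intro g hg
    rw [he, Finset.mem_singleton] at hg
    subst hg
    rcases hJ with ⟨h₁, h₂⟩ | ⟨h₁, h₂⟩ <;> rw [h₁, h₂]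
    exacts [G.s_ne_t, G.s_ne_t.symm]
  | series hS _ _ ih₁ ih₂ => exact hS.isEdgePartition.loopless ih₁ ih₂
  | parallel hP _ _ ih₁ ih₂ => exact hP.isEdgePartition.loopless ih₁ ih₂

end IsSP

namespace IsSeriesConn2

lemma assoc (hG : IsSeriesConn2 G X C) (hX : IsSeriesConn2 X A B) :
    ∃ Z, IsSeriesConn2 G A Z ∧ IsSeriesConn2 Z B C := by
  have hB : IsSubgraph B.toSignedGraph G.toSignedGraph := hX.sub2.trans hG.sub1
  have hBC : ∀ x ∈ B.verts, x ∈ C.verts → x = B.t := fun x hxB hxC =>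
    (hG.eq_mid_of_mem (hX.sub2.1 hxB) hxC).trans hX.tgt
  have hAC : Disjoint A.verts C.verts := Finset.disjoint_left.mpr fun x hxA hxC =>
    hX.t_notMem_left (((hG.eq_mid_of_mem (hX.sub1.1 hxA) hxC).trans hX.tgt) ▸ hxA)
  have hCB : B.t ∈ C.verts := (hX.tgt.symm.trans hG.mid) ▸ C.s_mem
  let Z := G.union B C hB hG.sub2 fun h => B.s_ne_t (hBC _ B.s_mem (h ▸ C.t_mem))
  refine ⟨Z, ⟨hX.sub1.trans hG.sub1, G.union_isSubgraph .., ?_, ?_, hX.mid, ?_, ?_,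
      hG.src.trans hX.src, hG.tgt⟩,
    ⟨G.isSubgraph_union_left .., G.isSubgraph_union_right .., rfl, ?_, hX.tgt.symm.trans hG.mid,
      rfl, Finset.disjoint_of_subset_left hX.sub2.2.1 hG.edge_disj, rfl, rfl⟩⟩
  · rw [TTGraph.union_verts, ← Finset.union_assoc, hX.vert_union, hG.vert_union]
  · rw [TTGraph.union_verts, Finset.inter_union_distrib_left, hX.vert_inter,
      Finset.disjoint_iff_inter_eq_empty.mp hAC, Finset.union_empty]
  · rw [TTGraph.union_edges, ← Finset.union_assoc, hX.edge_union, hG.edge_union]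
  · exact Finset.disjoint_union_right.mpr
      ⟨hX.edge_disj, Finset.disjoint_of_subset_left hX.sub1.2.1 hG.edge_disj⟩
  · ext x
    simp only [Finset.mem_inter, Finset.mem_singleton]
    exact ⟨fun ⟨hxB, hxC⟩ => hBC x hxB hxC, fun hx => hx ▸ ⟨B.t_mem, hCB⟩⟩

lemma assoc' (hG : IsSeriesConn2 G A Y) (hY : IsSeriesConn2 Y B C) :
    ∃ X, IsSeriesConn2 G X C ∧ IsSeriesConn2 X A B := by
  obtain ⟨Z, h₁, h₂⟩ := hG.rev.assoc hY.rev
  exact ⟨Z.rev, h₁.rev, h₂.rev⟩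

end IsSeriesConn2

end SeriesParallel
structure Suppressible (G : TTGraph) (v e f : ℕ) : Prop where
  ne_s : v ≠ G.s
  ne_t : v ≠ G.t
  mem_e : e ∈ G.edges
  mem_f : f ∈ G.edges
  e_ne_f : e ≠ f
  incidentOnce_e : G.IncidentOnce e v
  incidentOnce_f : G.IncidentOnce f v
  eq_of_incident : ∀ g ∈ G.edges, G.Incident g v → g = e ∨ g = f

/-- The path `e, f` through `v` becomes the single edge `e`, from the far end of `e` to the far
end of `f`, whose sign is the product of theirs. -/
def suppress (G : TTGraph) (v e f : ℕ) (h : Suppressible G v e f) : TTGraph where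
  verts := G.verts.erase v
  edges := G.edges.erase f
  fst g := if g = e then G.otherEnd e v else G.fst g
  snd g := if g = e then G.otherEnd f v else G.snd g
  sign g := if g = e then G.sign e == G.sign f else G.sign g
  fst_mem g hg := by
    obtain ⟨hgf, hg⟩ := Finset.mem_erase.mp hg
    split_ifs with hge
    · exact Finset.mem_erase.mpr ⟨h.incidentOnce_e.otherEnd_ne, otherEnd_mem h.mem_e v⟩
    · refine Finset.mem_erase.mpr ⟨fun hv => ?_, G.fst_mem g hg⟩
      rcases h.eq_of_incident g hg (Or.inl hv) with rfl | rfl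
      exacts [hge rfl, hgf rfl]
  snd_mem g hg := by
    obtain ⟨hgf, hg⟩ := Finset.mem_erase.mp hg
    split_ifs with hge
    · exact Finset.mem_erase.mpr ⟨h.incidentOnce_f.otherEnd_ne, otherEnd_mem h.mem_f v⟩
    · refine Finset.mem_erase.mpr ⟨fun hv => ?_, G.snd_mem g hg⟩
      rcases h.eq_of_incident g hg (Or.inr hv) with rfl | rfl
      exacts [hge rfl, hgf rfl]
  s := G.s
  t := G.t
  s_mem := Finset.mem_erase.mpr ⟨h.ne_s.symm, G.s_mem⟩
  t_mem := Finset.mem_erase.mpr ⟨h.ne_t.symm, G.t_mem⟩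
  s_ne_t := G.s_ne_t

section Suppress

variable {G : TTGraph} {v e f g : ℕ} (h : Suppressible G v e f)

@[simp] lemma suppress_verts : (suppress G v e f h).verts = G.verts.erase v := rfl
@[simp] lemma suppress_edges : (suppress G v e f h).edges = G.edges.erase f := rfl

@[simp] lemma suppress_s : (suppress G v e f h).s = G.s := rfl
@[simp] lemma suppress_t : (suppress G v e f h).t = G.t := rfl
lemma suppress_fst_self : (suppress G v e f h).fst e = G.otherEnd e v := if_pos rfl
lemma suppress_snd_self : (suppress G v e f h).snd e = G.otherEnd f v := if_pos rfl
lemma suppress_sign_self : (suppress G v e f h).sign e = (G.sign e == G.sign f) := if_pos rfl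
lemma suppress_fst_of_ne (hg : g ≠ e) : (suppress G v e f h).fst g = G.fst g := if_neg hg
lemma suppress_snd_of_ne (hg : g ≠ e) : (suppress G v e f h).snd g = G.snd g := if_neg hg
lemma suppress_sign_of_ne (hg : g ≠ e) : (suppress G v e f h).sign g = G.sign g := if_neg hg

end Suppress

namespace Suppressible

variable {G H H₁ H₂ : TTGraph} {v e f : ℕ}

lemma mem_verts (h : Suppressible G v e f) : v ∈ G.verts := by
  rcases h.incidentOnce_e with ⟨hv, -⟩ | ⟨-, hv⟩
  exacts [hv ▸ G.fst_mem e h.mem_e, hv ▸ G.snd_mem e h.mem_e]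

lemma swap (h : Suppressible G v e f) : Suppressible G v f e :=
  ⟨h.ne_s, h.ne_t, h.mem_f, h.mem_e, h.e_ne_f.symm, h.incidentOnce_f, h.incidentOnce_e,
    fun g hg hinc => (h.eq_of_incident g hg hinc).symm⟩

lemma rev (h : Suppressible G v e f) : Suppressible G.rev v e f :=
  ⟨h.ne_t, h.ne_s, h.mem_e, h.mem_f, h.e_ne_f, h.incidentOnce_e, h.incidentOnce_f,
    h.eq_of_incident⟩

lemma restrict (h : Suppressible G v e f)
    (hP : IsEdgePartition G.toSignedGraph H₁.toSignedGraph H₂.toSignedGraph)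
    (hv : v ∉ H₂.verts) (hs : v ≠ H₁.s) (ht : v ≠ H₁.t) : Suppressible H₁ v e f := by
  have he := hP.mem_left_of_incident h.mem_e h.incidentOnce_e.incident hv
  have hf := hP.mem_left_of_incident h.mem_f h.incidentOnce_f.incident hv
  exact ⟨hs, ht, he, hf, h.e_ne_f, (hP.sub1.incidentOnce_iff he).1 h.incidentOnce_e,
    (hP.sub1.incidentOnce_iff hf).1 h.incidentOnce_f, fun g hg hinc =>
      h.eq_of_incident g (hP.sub1.2.1 hg) ((hP.sub1.incident_iff hg).2 hinc)⟩

lemma isOnlyEdgeAt (h : Suppressible G v e f) (hH : IsSubgraph H.toSignedGraph G.toSignedGraph)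
    (hf : f ∉ H.edges) : H.IsOnlyEdgeAt e v := fun g hg hinc =>
  (h.eq_of_incident g (hH.2.1 hg) ((hH.incident_iff hg).2 hinc)).resolve_right
    (fun hgf => hf (hgf ▸ hg))

lemma mem_right_of_mem_left (h : Suppressible G v e f)
    (hP : IsEdgePartition G.toSignedGraph H₁.toSignedGraph H₂.toSignedGraph)
    (hH₂ : H₂.NoIsolated) (hv : v ∈ H₂.verts) (he : e ∈ H₁.edges) : f ∈ H₂.edges := by
  obtain ⟨g, hg, hinc⟩ := hH₂ v hv
  rcases h.eq_of_incident g (hP.sub2.2.1 hg) ((hP.sub2.incident_iff hg).2 hinc) with rfl | rfl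
  · exact absurd hg (Finset.disjoint_left.mp hP.edge_disj he)
  · exact hg

end Suppressible

lemma suppress_rev (h : Suppressible G v e f) :
    suppress G.rev v e f h.rev = (suppress G v e f h).rev := rfl

lemma isSubgraph_suppress {G H : TTGraph} {v e f : ℕ}
    (hH : IsSubgraph H.toSignedGraph G.toSignedGraph) (h : Suppressible G v e f)
    (hk : Suppressible H v e f) :
    IsSubgraph (suppress H v e f hk).toSignedGraph (suppress G v e f h).toSignedGraph := by
  refine ⟨Finset.erase_subset_erase _ hH.1, Finset.erase_subset_erase _ hH.2.1, fun g hg => ?_⟩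
  have hg := Finset.mem_of_mem_erase hg
  by_cases hge : g = e
  · subst hge
    rw [suppress_fst_self, suppress_fst_self, suppress_snd_self, suppress_snd_self,
      suppress_sign_self, suppress_sign_self, hH.otherEnd_eq hk.mem_e, hH.otherEnd_eq hk.mem_f,
      hH.sign_eq hk.mem_e, hH.sign_eq hk.mem_f]
    exact ⟨rfl, rfl, rfl⟩
  · rw [suppress_fst_of_ne _ hge, suppress_fst_of_ne _ hge, suppress_snd_of_ne _ hge,
      suppress_snd_of_ne _ hge, suppress_sign_of_ne _ hge, suppress_sign_of_ne _ hge]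
    exact hH.2.2 g hg

lemma isSubgraph_suppress_of_notMem {G H : TTGraph} {v e f : ℕ}
    (hH : IsSubgraph H.toSignedGraph G.toSignedGraph) (h : Suppressible G v e f)
    (hv : v ∉ H.verts) :
    IsSubgraph H.toSignedGraph (suppress G v e f h).toSignedGraph := by
  have he : e ∉ H.edges := fun he => hv (hH.mem_verts_of_incident he h.incidentOnce_e.incident)
  have hf : f ∉ H.edges := fun hf => hv (hH.mem_verts_of_incident hf h.incidentOnce_f.incident)
  refine ⟨fun x hx => Finset.mem_erase.mpr ⟨fun hxv => hv (hxv.symm ▸ hx), hH.1 hx⟩,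
    fun g hg => Finset.mem_erase.mpr ⟨fun hgf => hf (hgf.symm ▸ hg), hH.2.1 hg⟩, fun g hg => ?_⟩
  have hge : g ≠ e := fun hge => he (hge ▸ hg)
  rw [suppress_fst_of_ne _ hge, suppress_snd_of_ne _ hge, suppress_sign_of_ne _ hge]
  exact hH.2.2 g hg

section SuppressSP

variable {G H₁ H₂ : TTGraph} {v e f : ℕ}

lemma SignedGraph.IsEdgePartition.suppress
    (hP : IsEdgePartition G.toSignedGraph H₁.toSignedGraph H₂.toSignedGraph)
    (h : Suppressible G v e f) (hk : Suppressible H₁ v e f) (hv : v ∉ H₂.verts) :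
    IsEdgePartition (suppress G v e f h).toSignedGraph (suppress H₁ v e f hk).toSignedGraph
      H₂.toSignedGraph := by
  have hf : f ∉ H₂.edges := Finset.disjoint_left.mp hP.edge_disj hk.mem_f
  refine ⟨isSubgraph_suppress hP.sub1 h hk, isSubgraph_suppress_of_notMem hP.sub2 h hv, ?_, ?_,
    Finset.disjoint_of_subset_left (Finset.erase_subset _ _) hP.edge_disj⟩
  · rw [suppress_verts, suppress_verts, ← hP.vert_union, Finset.erase_union_distrib,
      Finset.erase_eq_of_notMem hv]
  · rw [suppress_edges, suppress_edges, ← hP.edge_union, Finset.erase_union_distrib,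
      Finset.erase_eq_of_notMem hf]

lemma IsSeriesConn2.suppress_left (hS : IsSeriesConn2 G H₁ H₂) (h : Suppressible G v e f)
    (hk : Suppressible H₁ v e f) (hv : v ∉ H₂.verts) :
    IsSeriesConn2 (suppress G v e f h) (suppress H₁ v e f hk) H₂ := by
  have hP := hS.isEdgePartition.suppress h hk hv
  refine ⟨hP.sub1, hP.sub2, hP.vert_union, ?_, hS.mid, hP.edge_union, hP.edge_disj, hS.src,
    hS.tgt⟩
  rw [suppress_verts, Finset.erase_inter, hS.vert_inter, suppress_t,
    Finset.erase_eq_of_notMem (Finset.notMem_singleton.mpr hk.ne_t)]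

lemma IsSeriesConn2.suppress_right (hS : IsSeriesConn2 G H₁ H₂) (h : Suppressible G v e f)
    (hk : Suppressible H₂ v e f) (hv : v ∉ H₁.verts) :
    IsSeriesConn2 (suppress G v e f h) H₁ (suppress H₂ v e f hk) :=
  (hS.rev.suppress_left h.rev hk.rev hv).rev

lemma IsParallelConn2.suppress_left (hP : IsParallelConn2 G H₁ H₂) (h : Suppressible G v e f)
    (hk : Suppressible H₁ v e f) (hv : v ∉ H₂.verts) :
    IsParallelConn2 (suppress G v e f h) (suppress H₁ v e f hk) H₂ := by
  have hP' := hP.isEdgePartition.suppress h hk hv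
  refine ⟨hP'.sub1, hP'.sub2, hP'.vert_union, ?_, hP.src_eq, hP.tgt_eq, hP'.edge_union,
    hP'.edge_disj, hP.src, hP.tgt⟩
  rw [suppress_verts, Finset.erase_inter, hP.vert_inter, suppress_s, suppress_t,
    Finset.erase_eq_of_notMem]
  rw [Finset.mem_insert, Finset.mem_singleton]
  exact fun hv' => hv'.elim hk.ne_s hk.ne_t

lemma IsSeriesConn2.isSignedK2_suppress (hS : IsSeriesConn2 G H₁ H₂) (h₁ : IsSignedK2 H₁)
    (h₂ : IsSignedK2 H₂) (he : e ∈ H₁.edges) (hf : f ∈ H₂.edges) (hv : v = H₁.t)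
    (h : Suppressible G v e f) : IsSignedK2 (suppress G v e f h) := by
  obtain ⟨hV₁, e₁, hE₁, hJ₁⟩ := h₁
  obtain ⟨hV₂, f₂, hE₂, hJ₂⟩ := h₂
  rw [hE₁, Finset.mem_singleton] at he
  rw [hE₂, Finset.mem_singleton] at hf
  subst he hf
  have hJe : G.Joins e H₁.s v := hv ▸ (hS.sub1.joins_iff (hE₁ ▸ Finset.mem_singleton_self e)).2 hJ₁
  have hJf : G.Joins f H₂.t v :=
    hv ▸ hS.mid ▸ ((hS.sub2.joins_iff (hE₂ ▸ Finset.mem_singleton_self f)).2 hJ₂).symm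
  have hsv : H₁.s ≠ v := hv ▸ H₁.s_ne_t
  have htv : H₂.t ≠ v := hv ▸ hS.mid ▸ H₂.s_ne_t.symm
  refine ⟨?_, e, ?_, Or.inl ⟨?_, ?_⟩⟩
  · rw [suppress_verts, suppress_s, suppress_t, ← hS.vert_union, hV₁, hV₂, hS.src, hS.tgt,
      ← hS.mid, ← hv]
    ext x
    simp only [Finset.mem_erase, Finset.mem_union, Finset.mem_insert, Finset.mem_singleton]
    grind
  · rw [suppress_edges, ← hS.edge_union, hE₁, hE₂]
    ext x
    simp only [Finset.mem_erase, Finset.mem_union, Finset.mem_singleton]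
    grind [h.e_ne_f]
  · rw [suppress_fst_self, suppress_s, hS.src, hJe.otherEnd_eq hsv]
  · rw [suppress_snd_self, suppress_t, hS.tgt, hJf.otherEnd_eq htv]

lemma isSP_suppress_pendant_junction_of_isSignedK2 (hsp : IsSP H₁)
    (hS : IsSeriesConn2 G H₁ H₂) (hK : IsSignedK2 H₂) (he : e ∈ H₁.edges)
    (hf : f ∈ H₂.edges) (hv : v = H₁.t) (hone : H₁.IsOnlyEdgeAt e v)
    (h : Suppressible G v e f) : IsSP (suppress G v e f h) := by
  induction hsp generalizing G with
  | k2 hk2 => exact IsSP.k2 (hS.isSignedK2_suppress hk2 hK he hf hv h)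
  | @parallel B B₁ B₂ hP hsp₁ hsp₂ =>
    refine absurd hone (hP.isEdgePartition.not_isOnlyEdgeAt hsp₁.noIsolated hsp₂.noIsolated ?_ ?_)
    · rw [hv, hP.tgt]; exact B₁.t_mem
    · rw [hv, hP.tgt, hP.tgt_eq]; exact B₂.t_mem
  | @series B B₁ B₂ hB hsp₁ hsp₂ _ ih₂ =>
    -- `G = S(B₁, Z)` with `Z = S(B₂, H₂)`, and `v` is the junction of `Z`.
    obtain ⟨Z, hG, hZ⟩ := hS.assoc hB
    have hv₂ : v = B₂.t := hv.trans hB.tgt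
    have hvB₁ : v ∉ B₁.verts := hv₂ ▸ hB.t_notMem_left
    have he₂ : e ∈ B₂.edges := hB.isEdgePartition.symm.mem_left_of_incident he
      ((hS.sub1.incident_iff he).1 h.incidentOnce_e.incident) hvB₁
    have hk : Suppressible Z v e f := h.restrict hG.isEdgePartition.symm hvB₁
      (by rw [hZ.src, hv₂]; exact B₂.s_ne_t.symm) (by rw [hZ.tgt, hv, hS.mid]; exact H₂.s_ne_t)
    exact IsSP.series (hG.suppress_right h hk hvB₁) hsp₁
      (ih₂ hZ he₂ hv₂ (hone.mono hB.sub2) hk)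

lemma isSP_suppress_pendant_junction (hsp₁ : IsSP H₁) (hsp₂ : IsSP H₂)
    (hS : IsSeriesConn2 G H₁ H₂) (he : e ∈ H₁.edges) (hf : f ∈ H₂.edges) (hv : v = H₁.t)
    (hone₁ : H₁.IsOnlyEdgeAt e v) (hone₂ : H₂.IsOnlyEdgeAt f v) (h : Suppressible G v e f) :
    IsSP (suppress G v e f h) := by
  induction hsp₂ generalizing G with
  | k2 hk2 => exact isSP_suppress_pendant_junction_of_isSignedK2 hsp₁ hS hk2 he hf hv hone₁ h
  | @parallel C C₁ C₂ hP hC₁ hC₂ =>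
    refine absurd hone₂ (hP.isEdgePartition.not_isOnlyEdgeAt hC₁.noIsolated hC₂.noIsolated ?_ ?_)
    · rw [hv, hS.mid, hP.src]; exact C₁.s_mem
    · rw [hv, hS.mid, hP.src, hP.src_eq]; exact C₂.s_mem
  | @series C C₁ C₂ hC _ hC₂ ih₁ _ =>
    -- `G = S(X, C₂)` with `X = S(H₁, C₁)`, and `v` is the junction of `X`.
    obtain ⟨X, hG, hX⟩ := hS.assoc' hC
    have hv₁ : v = C₁.s := hv.trans (hS.mid.trans hC.src)
    have hvC₂ : v ∉ C₂.verts := hv₁ ▸ hC.s_notMem_right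
    have hf₁ : f ∈ C₁.edges := hC.isEdgePartition.mem_left_of_incident hf
      ((hS.sub2.incident_iff hf).1 h.incidentOnce_f.incident) hvC₂
    have hk : Suppressible X v e f := h.restrict hG.isEdgePartition hvC₂
      (by rw [hX.src, hv]; exact H₁.s_ne_t.symm) (by rw [hX.tgt, hv₁]; exact C₁.s_ne_t)
    exact IsSP.series (hG.suppress_left h hk hvC₂)
      (ih₁ hX hf₁ (hone₂.mono hC.sub1) hk) hC₂

lemma IsSeriesConn2.isSP_suppress_junction (hS : IsSeriesConn2 G H₁ H₂) (hsp₁ : IsSP H₁)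
    (hsp₂ : IsSP H₂) (hv : v = H₁.t) (h : Suppressible G v e f) :
    IsSP (suppress G v e f h) := by
  have hv₁ : v ∈ H₁.verts := hv ▸ H₁.t_mem
  have hv₂ : v ∈ H₂.verts := hv ▸ hS.mid ▸ H₂.s_mem
  have hP := hS.isEdgePartition
  rcases hP.mem_or_mem h.mem_e with he | he
  · have hf := h.mem_right_of_mem_left hP hsp₂.noIsolated hv₂ he
    exact isSP_suppress_pendant_junction hsp₁ hsp₂ hS he hf hv
      (h.isOnlyEdgeAt hS.sub1 (Finset.disjoint_right.mp hS.edge_disj hf))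
      (h.swap.isOnlyEdgeAt hS.sub2 (Finset.disjoint_left.mp hS.edge_disj he)) h
  · have hf := h.mem_right_of_mem_left hP.symm hsp₁.noIsolated hv₁ he
    exact (isSP_suppress_pendant_junction hsp₂.rev hsp₁.rev hS.rev he hf (hv.trans hS.mid)
      (h.isOnlyEdgeAt hS.sub2 (Finset.disjoint_left.mp hS.edge_disj hf))
      (h.swap.isOnlyEdgeAt hS.sub1 (Finset.disjoint_right.mp hS.edge_disj he)) h.rev).rev

lemma IsSeriesConn2.isSP_suppress_left (hS : IsSeriesConn2 G H₁ H₂) (hsp₂ : IsSP H₂)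
    (ih : ∀ hk : Suppressible H₁ v e f, IsSP (suppress H₁ v e f hk))
    (h : Suppressible G v e f) (hv : v ∈ H₁.verts) (hvt : v ≠ H₁.t) :
    IsSP (suppress G v e f h) := by
  have hv₂ : v ∉ H₂.verts := fun hv₂ => hvt (hS.eq_mid_of_mem hv hv₂)
  have hk := h.restrict hS.isEdgePartition hv₂ (hS.src ▸ h.ne_s) hvt
  exact IsSP.series (hS.suppress_left h hk hv₂) (ih hk) hsp₂

lemma IsParallelConn2.isSP_suppress_left (hP : IsParallelConn2 G H₁ H₂) (hsp₂ : IsSP H₂)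
    (ih : ∀ hk : Suppressible H₁ v e f, IsSP (suppress H₁ v e f hk))
    (h : Suppressible G v e f) (hv : v ∈ H₁.verts) : IsSP (suppress G v e f h) := by
  have hv₂ : v ∉ H₂.verts := fun hv₂ => by
    have hv' := hP.vert_inter ▸ Finset.mem_inter.mpr ⟨hv, hv₂⟩
    rw [Finset.mem_insert, Finset.mem_singleton, ← hP.src, ← hP.tgt] at hv'
    exact hv'.elim h.ne_s h.ne_t
  have hk := h.restrict hP.isEdgePartition hv₂ (hP.src ▸ h.ne_s) (hP.tgt ▸ h.ne_t)
  exact IsSP.parallel (hP.suppress_left h hk hv₂) (ih hk) hsp₂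

theorem IsSP.suppress (hsp : IsSP G) (h : Suppressible G v e f) :
    IsSP (suppress G v e f h) := by
  induction hsp generalizing v e f with
  | k2 hk2 =>
    have hv := h.mem_verts
    rw [hk2.1, Finset.mem_insert, Finset.mem_singleton] at hv
    exact (hv.elim h.ne_s h.ne_t).elim
  | parallel hP hsp₁ hsp₂ ih₁ ih₂ =>
    rcases Finset.mem_union.mp (hP.vert_union ▸ h.mem_verts) with hv | hv
    · exact hP.isSP_suppress_left hsp₂ ih₁ h hv
    · exact hP.symm.isSP_suppress_left hsp₁ ih₂ h hv
  | @series G H₁ H₂ hS hsp₁ hsp₂ ih₁ ih₂ =>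
    by_cases hvt : v = H₁.t
    · exact hS.isSP_suppress_junction hsp₁ hsp₂ hvt h
    rcases Finset.mem_union.mp (hS.vert_union ▸ h.mem_verts) with hv | hv
    · exact hS.isSP_suppress_left hsp₂ ih₁ h hv hvt
    · exact (hS.rev.isSP_suppress_left hsp₁.rev (fun hk => (ih₂ hk.rev).rev) h.rev hv
        (by rw [TTGraph.rev_t, ← hS.mid]; exact hvt)).rev

end SuppressSP

lemma dirVal_ne_zero (b : Bool) : dirVal b ≠ 0 := by cases b <;> decide

namespace SignedGraph

variable {P : SignedGraph} {o₁ o₂ : ℕ → Bool} {φ : ℕ → ℤ} {g v z : ℕ}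

def edgeExcess (P : SignedGraph) (o₁ o₂ : ℕ → Bool) (φ : ℕ → ℤ) (z g : ℕ) : ℤ :=
  (if P.fst g = z then dirVal (o₁ g) * φ g else 0) +
    (if P.snd g = z then dirVal (o₂ g) * φ g else 0)

lemma excess_eq_sum_edgeExcess :
    P.excess o₁ o₂ φ z = ∑ g ∈ P.edges, P.edgeExcess o₁ o₂ φ z g := rfl

lemma edgeExcess_of_not_incident (h : ¬ P.Incident g z) : P.edgeExcess o₁ o₂ φ z g = 0 := by
  rw [Incident, not_or] at h
  simp [edgeExcess, h.1, h.2]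

def dirAt (P : SignedGraph) (o₁ o₂ : ℕ → Bool) (v g : ℕ) : Bool :=
  if P.fst g = v then o₁ g else o₂ g

def dirFar (P : SignedGraph) (o₁ o₂ : ℕ → Bool) (v g : ℕ) : Bool :=
  if P.fst g = v then o₂ g else o₁ g

lemma xor_dirAt_dirFar : xor (P.dirAt o₁ o₂ v g) (P.dirFar o₁ o₂ v g) = xor (o₁ g) (o₂ g) := by
  unfold dirAt dirFar
  split
  exacts [rfl, Bool.xor_comm _ _]

lemma dirAt_dirFar_of_eq {x y : Bool} (h₁ : o₁ g = if P.fst g = v then x else y)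
    (h₂ : o₂ g = if P.fst g = v then y else x) :
    P.dirAt o₁ o₂ v g = x ∧ P.dirFar o₁ o₂ v g = y ∧ xor (o₁ g) (o₂ g) = xor x y := by
  unfold dirAt dirFar
  split_ifs at * <;> simp [*, Bool.xor_comm]

lemma IncidentOnce.edgeExcess_self (h : P.IncidentOnce g v) :
    P.edgeExcess o₁ o₂ φ v g = dirVal (P.dirAt o₁ o₂ v g) * φ g := by
  rcases h with ⟨h₁, h₂⟩ | ⟨h₁, h₂⟩ <;> simp [edgeExcess, dirAt, h₁, h₂]

lemma IncidentOnce.edgeExcess_of_ne (h : P.IncidentOnce g v) (hz : z ≠ v) :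
    P.edgeExcess o₁ o₂ φ z g =
      if P.otherEnd g v = z then dirVal (P.dirFar o₁ o₂ v g) * φ g else 0 := by
  rcases h with ⟨h₁, h₂⟩ | ⟨h₁, h₂⟩
  · simp [edgeExcess, otherEnd, dirFar, h₁, hz.symm]
  · simp [edgeExcess, otherEnd, dirFar, h₁, h₂, hz.symm]

lemma isOrientation_iff :
    P.IsOrientation o₁ o₂ ↔ ∀ g ∈ P.edges, xor (o₁ g) (o₂ g) = P.sign g := by
  refine forall₂_congr fun g _ => ?_
  cases o₁ g <;> cases o₂ g <;> cases P.sign g <;> decide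

lemma IsNZFlow.not_isOnlyEdgeAt {k : ℕ} (hfl : P.IsNZFlow k o₁ o₂ φ) (hv : v ∈ P.verts)
    (hg : g ∈ P.edges) (hinc : P.IncidentOnce g v) : ¬ P.IsOnlyEdgeAt g v := by
  intro hone
  have hcons := hfl.conserve v hv
  rw [excess_eq_sum_edgeExcess, Finset.sum_eq_single_of_mem g hg fun g' hg' hne =>
    edgeExcess_of_not_incident fun hinc' => hne (hone g' hg' hinc'),
    hinc.edgeExcess_self] at hcons
  exact mul_ne_zero (dirVal_ne_zero _) (hfl.nonzero g hg) hcons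

end SignedGraph

namespace Suppressible

variable {G : TTGraph} {v e f : ℕ} {o₁ o₂ o₁' o₂' : ℕ → Bool} {φ φ' : ℕ → ℤ}

lemma excess_self (h : Suppressible G v e f) :
    G.excess o₁ o₂ φ v = dirVal (G.dirAt o₁ o₂ v e) * φ e + dirVal (G.dirAt o₁ o₂ v f) * φ f := by
  rw [excess_eq_sum_edgeExcess, Finset.sum_eq_add_of_mem e f h.mem_e h.mem_f h.e_ne_f,
    h.incidentOnce_e.edgeExcess_self, h.incidentOnce_f.edgeExcess_self]
  exact fun g hg hne => edgeExcess_of_not_incident fun hinc =>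
    (h.eq_of_incident g hg hinc).elim hne.1 hne.2

lemma excess_suppress (h : Suppressible G v e f)
    (hagree : ∀ g ∈ G.edges, g ≠ e → g ≠ f → o₁' g = o₁ g ∧ o₂' g = o₂ g ∧ φ' g = φ g)
    (hu : dirVal (o₁' e) * φ' e = dirVal (G.dirFar o₁ o₂ v e) * φ e)
    (hw : dirVal (o₂' e) * φ' e = dirVal (G.dirFar o₁ o₂ v f) * φ f) {z : ℕ} (hz : z ≠ v) :
    (suppress G v e f h).excess o₁' o₂' φ' z = G.excess o₁ o₂ φ z := by
  have he : e ∈ G.edges.erase f := Finset.mem_erase.mpr ⟨h.e_ne_f, h.mem_e⟩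
  rw [excess_eq_sum_edgeExcess, excess_eq_sum_edgeExcess, suppress_edges,
    ← Finset.add_sum_erase _ _ he, ← Finset.add_sum_erase _ _ h.mem_f,
    ← Finset.add_sum_erase _ _ he]
  have hrest : ∑ g ∈ (G.edges.erase f).erase e, (suppress G v e f h).edgeExcess o₁' o₂' φ' z g =
      ∑ g ∈ (G.edges.erase f).erase e, G.edgeExcess o₁ o₂ φ z g := by
    refine Finset.sum_congr rfl fun g hg => ?_
    obtain ⟨hge, hgf, hg⟩ : g ≠ e ∧ g ≠ f ∧ g ∈ G.edges := by simpa using hg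
    obtain ⟨h₁, h₂, h₃⟩ := hagree g hg hge hgf
    rw [edgeExcess, edgeExcess, suppress_fst_of_ne _ hge, suppress_snd_of_ne _ hge, h₁, h₂, h₃]
  have hmerged : (suppress G v e f h).edgeExcess o₁' o₂' φ' z e =
      G.edgeExcess o₁ o₂ φ z e + G.edgeExcess o₁ o₂ φ z f := by
    rw [h.incidentOnce_e.edgeExcess_of_ne hz, h.incidentOnce_f.edgeExcess_of_ne hz, edgeExcess,
      suppress_fst_self, suppress_snd_self, hu, hw]
  rw [hrest, hmerged]
  ring

end Suppressible

section SuppressFlow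

lemma xor_xor_beq (a b c d : Bool) : xor b (xor (a == c) d) = (xor a b == xor c d) := by
  decide +revert

lemma dirVal_xor_beq_mul {a c : Bool} {x y : ℤ} (h : dirVal a * x + dirVal c * y = 0)
    (d : Bool) : dirVal (xor (a == c) d) * x = dirVal d * y := by
  cases a <;> cases c <;> cases d <;> simp [dirVal] at h ⊢ <;> linarith

lemma dirVal_xor_add_dirVal_xor {a b s t : Bool} (h : xor a b = (s == t)) :
    dirVal (xor a s) + dirVal (xor b t) = 0 := by
  revert h; cases a <;> cases b <;> cases s <;> cases t <;> decide

variable {G : TTGraph} {v e f k : ℕ} {o₁ o₂ : ℕ → Bool} {φ : ℕ → ℤ}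

/-- The merged edge keeps the value and far half-edge of `e`; conservation at `v` gives
`φ f = ± φ e`, which fixes its half-edge at the far end of `f`. -/
lemma SignedGraph.IsNZFlow.suppress (hfl : G.IsNZFlow k o₁ o₂ φ) (h : Suppressible G v e f) :
    (suppress G v e f h).HasNZFlow k := by
  have horient := isOrientation_iff.mp hfl.orient
  have hv := h.excess_self ▸ hfl.conserve v h.mem_verts
  refine ⟨Function.update o₁ e (G.dirFar o₁ o₂ v e),
    Function.update o₂ e (xor (G.dirAt o₁ o₂ v e == G.dirAt o₁ o₂ v f) (G.dirFar o₁ o₂ v f)), φ,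
    isOrientation_iff.mpr fun g hg => ?_, fun g hg => hfl.nonzero g (Finset.mem_of_mem_erase hg),
    fun g hg => hfl.bounded g (Finset.mem_of_mem_erase hg), fun z hz => ?_⟩
  · by_cases hge : g = e
    · rw [hge, Function.update_self, Function.update_self, suppress_sign_self,
        ← horient e h.mem_e, ← horient f h.mem_f, ← xor_dirAt_dirFar (v := v),
        ← xor_dirAt_dirFar (v := v) (g := f), xor_xor_beq]
    · rw [Function.update_of_ne hge, Function.update_of_ne hge, suppress_sign_of_ne _ hge]
      exact horient g (Finset.mem_of_mem_erase hg)
  · obtain ⟨hzv, hz⟩ := Finset.mem_erase.mp hz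
    rw [h.excess_suppress (fun g _ hge _ => ⟨Function.update_of_ne hge _ _,
      Function.update_of_ne hge _ _, rfl⟩) (by rw [Function.update_self])
      (by rw [Function.update_self, dirVal_xor_beq_mul hv]) hzv]
    exact hfl.conserve z hz

/-- Both `e` and `f` carry the value of the merged edge, with the half-edges at `v` forced by
their signs; the sign of the merged edge makes the two contributions cancel at `v`. -/
lemma Suppressible.hasNZFlow_of_suppress (h : Suppressible G v e f)
    (hfl : (suppress G v e f h).IsNZFlow k o₁ o₂ φ) : G.HasNZFlow k := by
  have horient := isOrientation_iff.mp hfl.orient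
  have hfe : f ≠ e := h.e_ne_f.symm
  have he : e ∈ (suppress G v e f h).edges := Finset.mem_erase.mpr ⟨h.e_ne_f, h.mem_e⟩
  let o₁' := Function.update (Function.update o₁ f
    (if G.fst f = v then xor (o₂ e) (G.sign f) else o₂ e))
    e (if G.fst e = v then xor (o₁ e) (G.sign e) else o₁ e)
  let o₂' := Function.update (Function.update o₂ f
    (if G.fst f = v then o₂ e else xor (o₂ e) (G.sign f)))
    e (if G.fst e = v then o₁ e else xor (o₁ e) (G.sign e))
  let φ' := Function.update φ f (φ e)
  have hE := dirAt_dirFar_of_eq (P := G.toSignedGraph) (v := v) (o₁ := o₁') (o₂ := o₂') (g := e)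
    (Function.update_self ..) (Function.update_self ..)
  have hF := dirAt_dirFar_of_eq (P := G.toSignedGraph) (v := v) (o₁ := o₁') (o₂ := o₂') (g := f)
    (x := xor (o₂ e) (G.sign f)) (y := o₂ e)
    (by simp only [o₁', Function.update_of_ne hfe, Function.update_self])
    (by simp only [o₂', Function.update_of_ne hfe, Function.update_self])
  have hφe : φ' e = φ e := Function.update_of_ne h.e_ne_f _ _
  have hφf : φ' f = φ e := Function.update_self ..
  have hφ' : ∀ g ∈ G.edges, ∃ g' ∈ (suppress G v e f h).edges, φ' g = φ g' := by
    intro g hg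
    by_cases hgf : g = f
    · exact ⟨e, he, hgf ▸ hφf⟩
    · exact ⟨g, Finset.mem_erase.mpr ⟨hgf, hg⟩, Function.update_of_ne hgf _ _⟩
  have hagree : ∀ g ∈ G.edges, g ≠ e → g ≠ f → o₁ g = o₁' g ∧ o₂ g = o₂' g ∧ φ g = φ' g :=
    fun g _ hge hgf => by simp [o₁', o₂', φ', hge, hgf]
  refine ⟨o₁', o₂', φ', isOrientation_iff.mpr fun g hg => ?_, fun g hg => ?_, fun g hg => ?_,
    fun z hz => ?_⟩
  · by_cases hge : g = e
    · rw [hge, hE.2.2, Bool.xor_right_comm, Bool.xor_self, Bool.false_xor]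
    by_cases hgf : g = f
    · rw [hgf, hF.2.2, Bool.xor_right_comm, Bool.xor_self, Bool.false_xor]
    obtain ⟨h₁, h₂, -⟩ := hagree g hg hge hgf
    rw [← h₁, ← h₂, ← suppress_sign_of_ne h hge]
    exact horient g (Finset.mem_erase.mpr ⟨hgf, hg⟩)
  · obtain ⟨g', hg', hφg⟩ := hφ' g hg; exact hφg ▸ hfl.nonzero g' hg'
  · obtain ⟨g', hg', hφg⟩ := hφ' g hg; exact hφg ▸ hfl.bounded g' hg'
  by_cases hzv : z = v
  · have hmerged := horient e he
    rw [suppress_sign_self] at hmerged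
    rw [hzv, h.excess_self, hE.1, hF.1, hφe, hφf,
      ← add_mul, dirVal_xor_add_dirVal_xor hmerged, zero_mul]
  · rw [← h.excess_suppress hagree (by rw [hE.2.1, hφe]) (by rw [hF.2.1, hφf]) hzv]
    exact hfl.conserve z (Finset.mem_erase.mpr ⟨hzv, hz⟩)

end SuppressFlow

lemma IsSP.exists_suppressible {G : TTGraph} {v k : ℕ} {o₁ o₂ : ℕ → Bool} {φ : ℕ → ℤ}
    (hsp : IsSP G) (hfl : G.IsNZFlow k o₁ o₂ φ) (hv : v ∈ G.verts) (hvs : v ≠ G.s)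
    (hvt : v ≠ G.t) (hdeg : G.degree v < 3) : ∃ e f, Suppressible G v e f := by
  have hG := hsp.loopless
  rw [hG.degree_eq_card v] at hdeg
  set I := G.edges.filter (G.Incident · v)
  have hmem : ∀ g, g ∈ I ↔ g ∈ G.edges ∧ G.Incident g v := fun g => Finset.mem_filter
  obtain ⟨g, hg, hinc⟩ := hsp.noIsolated v hv
  have hcard : I.card = 2 := by
    have hne : I.card ≠ 1 := fun h1 => by
      obtain ⟨g', hI'⟩ := Finset.card_eq_one.mp h1
      have hg' := (hmem g').1 (hI' ▸ Finset.mem_singleton_self g')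
      exact hfl.not_isOnlyEdgeAt hv hg'.1 (hG.incidentOnce hg'.1 hg'.2) fun g'' hg'' hinc'' =>
        Finset.mem_singleton.mp (hI' ▸ (hmem g'').2 ⟨hg'', hinc''⟩)
    have hpos : 0 < I.card := Finset.card_pos.mpr ⟨g, (hmem g).2 ⟨hg, hinc⟩⟩
    omega
  obtain ⟨e, f, hef, hIef⟩ := Finset.card_eq_two.mp hcard
  have he := (hmem e).1 (hIef ▸ Finset.mem_insert_self e {f})
  have hf := (hmem f).1 (hIef ▸ Finset.mem_insert_of_mem (Finset.mem_singleton_self f))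
  refine ⟨e, f, hvs, hvt, he.1, hf.1, hef, hG.incidentOnce he.1 he.2, hG.incidentOnce hf.1 hf.2,
    fun g hg hinc => ?_⟩
  simpa [hIef] using (hmem g).2 ⟨hg, hinc⟩

/-- In a minimum counterexample, every non-terminal vertex
has degree at least three. -/
theorem min_counterexample_nonterminal_degree_ge_three (G : TTGraph)
    (hmin : MinCounterexample G) :
    ∀ v ∈ G.verts, v ≠ G.s → v ≠ G.t → 3 ≤ G.toSignedGraph.degree v := by
  obtain ⟨hsp, ⟨k, o₁, o₂, φ, hfl⟩, hno6, hminimal⟩ := hmin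
  intro v hv hvs hvt
  by_contra! hdeg
  obtain ⟨e, f, h⟩ := hsp.exists_suppressible hfl hv hvs hvt hdeg
  have hle := hminimal (suppress G v e f h) (hsp.suppress h) ⟨k, hfl.suppress h⟩
    fun ⟨_, _, _, hfl₆⟩ => hno6 (h.hasNZFlow_of_suppress hfl₆)
  exact absurd hle (not_le.mpr (Finset.card_erase_lt_of_mem h.mem_f))
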